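/- arXiv:1411.5494 — 4 statements merged into one kernel-verified Lean document; each statement's English description precedes it below -/
import Mathlib

section
/- Let F be a graph CNF whose underlying graph is an (n,d,a)-expander with n ≥ 2, degree bound d ≥ 3, and expansion constant a > 0. Then the subfunction width of F satisfies sfw(F) ≥ (min{1,a}/(8d))·n. -/
/-!
Cut the variable order after its first `⌈n/2⌉` variables, so that the remaining set `Q` has at
most `n/2` vertices, and take a maximal family of crossing edges `a_i u_i` in which no `a_i` is
adjacent to another `a_j` or `u_j`. Let `B` and `U` be the neighbourhoods of the `a_i` and of the
`u_i`. By maximality every crossing edge `b u` has `b ∈ B ∪ U` or `u ∈ B`, so `Q \ B` has all its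
outside neighbours in `B ∪ U`. With `k` pairs, `|B|, |U| ≤ d k`, and expansion of `Q \ B` gives
`min 1 a * |Q| ≤ 3 d k`, that is `k ≥ min 1 a * n / (8 d)`.
-/

abbrev Var := ℕ
abbrev Lit := Var × Bool
abbrev Clause := Finset Lit
abbrev CNF := Finset Clause

def varsClause (c : Clause) : Finset Var := c.image Prod.fst
def varsCNF (F : CNF) : Finset Var := F.sup varsClause
def sizeCNF (F : CNF) : ℕ := ∑ c ∈ F, c.card

def satClauseOn (X : Finset Var) (f : Var → Bool) (c : Clause) : Prop :=
  ∃ l ∈ c, l.1 ∈ X ∧ f l.1 = l.2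

instance (X : Finset Var) (f : Var → Bool) : DecidablePred (satClauseOn X f) := fun c => by
  unfold satClauseOn; infer_instance

def restrict (F : CNF) (X : Finset Var) (f : Var → Bool) : CNF :=
  (F.filter (fun c => ¬ satClauseOn X f c)).image (fun c => c.filter (fun l => l.1 ∉ X))

def st (F : CNF) (X : Finset Var) : Set CNF := { G | ∃ f : Var → Bool, G = restrict F X f }

noncomputable def stw (F : CNF) (σ : List Var) : ℕ :=
  (Finset.Icc 1 σ.length).sup fun i => (st F ((σ.take i).toFinset)).ncard

def satCNF (F : CNF) (f : Var → Bool) : Prop := ∀ c ∈ F, ∃ l ∈ c, f l.1 = l.2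

structure OBDD (σ : List Var) where
  size : ℕ
  label : Fin size → (Fin σ.length) ⊕ Bool
  succ : Fin size → Bool → Fin size
  source : Fin size
  ordered : ∀ v i, label v = Sum.inl i → ∀ b j, label (succ v b) = Sum.inl j → i < j

def OBDD.evalAux {σ : List Var} (D : OBDD σ) (f : Var → Bool) : ℕ → Fin D.size → Bool
  | 0, v => match D.label v with | .inr b => b | .inl _ => false
  | n+1, v => match D.label v with
    | .inr b => b
    | .inl i => D.evalAux f n (D.succ v (f (σ.get i)))

def OBDD.eval {σ : List Var} (D : OBDD σ) (f : Var → Bool) : Bool :=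
  D.evalAux f (σ.length + 1) D.source

def OBDD.computes {σ : List Var} (D : OBDD σ) (F : CNF) : Prop :=
  ∀ f : Var → Bool, D.eval f = true ↔ satCNF F f
/-- F is a graph CNF: its clauses are exactly positive 2-clauses (edges of a graph). -/
def GraphCNF (F : CNF) : Prop :=
  ∀ c ∈ F, ∃ u v : Var, u ≠ v ∧ c = ({(u, true), (v, true)} : Clause)

/-- A set of e clauses of the graph CNF F is subfunction productive relative to the
prefix-variable set P. -/
def SubfunProductive (F : CNF) (P : Finset Var) (e : ℕ) : Prop :=
  ∃ a u : Fin e → Var,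
    Function.Injective a ∧ Function.Injective u ∧
    (∀ i, a i ∈ P) ∧ (∀ i, u i ∈ varsCNF F \ P) ∧
    (∀ i, ({(a i, true), (u i, true)} : Clause) ∈ F) ∧
    (∀ i j, i ≠ j →
      ({(a i, true), (a j, true)} : Clause) ∉ F ∧
      ({(a i, true), (u j, true)} : Clause) ∉ F)

/-- The subfunction width of F. -/
noncomputable def sfw (F : CNF) : ℕ :=
  sInf { m | ∃ σ : List Var, σ.Nodup ∧ σ.toFinset = varsCNF F ∧
    m = (Finset.Icc 1 σ.length).sup
      (fun i => sSup { e | SubfunProductive F ((σ.take i).toFinset) e }) }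
/-- Vertex set of a graph given by its edge set. -/
def verts (Eg : Finset (Finset Var)) : Finset Var := Eg.sup id

/-- Open neighborhood of W in the graph with edge set Eg. -/
def nbhd (Eg : Finset (Finset Var)) (W : Finset Var) : Finset Var :=
  (verts Eg).filter (fun v => v ∉ W ∧ ∃ w ∈ W, ({v, w} : Finset Var) ∈ Eg)

/-- Eg is the edge set of an (n,d,a)-expander: n vertices, all edges of size 2,
maximum degree ≤ d, and |N(W)| ≥ a·|W| for all W with |W| ≤ n/2. -/
def IsExpander (Eg : Finset (Finset Var)) (n d : ℕ) (a : ℝ) : Prop :=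
  (verts Eg).card = n ∧
  (∀ e ∈ Eg, e.card = 2) ∧
  (∀ v ∈ verts Eg, (Eg.filter (fun e => v ∈ e)).card ≤ d) ∧
  (∀ W ⊆ verts Eg, (W.card : ℝ) ≤ (n : ℝ) / 2 → a * W.card ≤ ((nbhd Eg W).card : ℝ))

open Finset

def nbr (Eg : Finset (Finset Var)) (v : Var) : Finset Var :=
  (verts Eg).filter (fun w => ({v, w} : Finset Var) ∈ Eg)

/-- `SubfunProductive` read on the edge set, with the clauses `{a_i, u_i}` as pairs `(a_i, u_i)`. -/
structure IsProductiveFamily (Eg : Finset (Finset Var)) (P : Finset Var)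
    (S : Finset (Var × Var)) : Prop where
  crossing : ∀ x ∈ S, x.1 ∈ P ∧ x.2 ∈ verts Eg \ P ∧ ({x.1, x.2} : Finset Var) ∈ Eg
  independent : ∀ x ∈ S, ∀ y ∈ S, x ≠ y →
    ({x.1, y.1} : Finset Var) ∉ Eg ∧ ({x.1, y.2} : Finset Var) ∉ Eg

/-- No crossing edge can be added to `S` without violating `IsProductiveFamily`. -/
def IsSaturated (Eg : Finset (Finset Var)) (P : Finset Var) (S : Finset (Var × Var)) : Prop :=
  ∀ b ∈ P, ∀ u ∈ verts Eg \ P, ({b, u} : Finset Var) ∈ Eg →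
    ∃ x ∈ S, ({x.1, b} : Finset Var) ∈ Eg ∨ ({x.2, b} : Finset Var) ∈ Eg ∨
      ({x.1, u} : Finset Var) ∈ Eg

section Graph

variable {Eg : Finset (Finset Var)}

lemma mem_verts_of_mem {e : Finset Var} {v : Var} (he : e ∈ Eg) (hv : v ∈ e) : v ∈ verts Eg :=
  le_sup (f := id) he hv

lemma mem_nbr {v w : Var} : w ∈ nbr Eg v ↔ ({v, w} : Finset Var) ∈ Eg := by
  simp only [nbr, mem_filter, and_iff_right_iff_imp]
  exact fun h => mem_verts_of_mem h (by simp)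

lemma nbr_eq_empty {v : Var} (hv : v ∉ verts Eg) : nbr Eg v = ∅ :=
  eq_empty_of_forall_notMem fun _ hw => hv (mem_verts_of_mem (mem_nbr.mp hw) (by simp))

lemma card_nbr_le {d : ℕ} (h2 : ∀ e ∈ Eg, e.card = 2)
    (hdeg : ∀ v ∈ verts Eg, (Eg.filter (fun e => v ∈ e)).card ≤ d) (v : Var) :
    (nbr Eg v).card ≤ d := by
  by_cases hv : v ∈ verts Eg
  · refine (card_le_card_of_injOn (fun w => ({v, w} : Finset Var)) ?_ ?_).trans (hdeg v hv)
    · intro w hw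
      simp [mem_nbr.mp (mem_coe.mp hw)]
    · intro w hw w' _ h
      have hvw : w ≠ v := by
        rintro rfl
        simpa using h2 _ (mem_nbr.mp (mem_coe.mp hw))
      have hw : w ∈ ({v, w'} : Finset Var) := by
        simp only at h
        simp [← h]
      simpa [hvw] using hw
  · simp [nbr_eq_empty hv]

lemma image_fst_image_mk_true (e : Finset Var) :
    (e.image (fun v => ((v, true) : Lit))).image Prod.fst = e := by
  rw [image_image]
  exact image_id

lemma pair_mem_graphCNF_iff {F : CNF} (hF : F = Eg.image (fun e => e.image (fun v => (v, true))))
    {x y : Var} : ({(x, true), (y, true)} : Clause) ∈ F ↔ ({x, y} : Finset Var) ∈ Eg := by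
  subst hF
  constructor
  · intro h
    obtain ⟨e, he, hee⟩ := mem_image.mp h
    have := congrArg (fun c : Clause => c.image Prod.fst) hee
    simp only [image_fst_image_mk_true, image_insert, image_singleton] at this
    rwa [← this]
  · exact fun h => mem_image.mpr ⟨_, h, by simp [image_insert]⟩

lemma varsCNF_graphCNF {F : CNF} (hF : F = Eg.image (fun e => e.image (fun v => (v, true)))) :
    varsCNF F = verts Eg := by
  subst hF
  simp only [varsCNF, verts, sup_image]
  exact sup_congr rfl fun e _ => image_fst_image_mk_true e

end Graph

namespace IsProductiveFamily

variable {Eg : Finset (Finset Var)} {P : Finset Var} {S : Finset (Var × Var)}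

-- Two pairs sharing an endpoint would turn an edge of one into a forbidden edge of the other.
lemma injOn_fst (hS : IsProductiveFamily Eg P S) : Set.InjOn Prod.fst (S : Set (Var × Var)) := by
  intro x hx y hy h
  by_contra hxy
  exact (hS.independent x hx y hy hxy).2 (h ▸ (hS.crossing y hy).2.2)

lemma injOn_snd (hS : IsProductiveFamily Eg P S) : Set.InjOn Prod.snd (S : Set (Var × Var)) := by
  intro x hx y hy h
  by_contra hxy
  exact (hS.independent x hx y hy hxy).2 (h ▸ (hS.crossing x hx).2.2)

lemma subfunProductive {F : CNF} (hF : F = Eg.image (fun e => e.image (fun v => (v, true))))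
    (hS : IsProductiveFamily Eg P S) : SubfunProductive F P S.card := by
  set g := S.equivFin.symm
  have hg : ∀ i j, i ≠ j → (g i : Var × Var) ≠ g j := fun i j hij h =>
    hij (g.injective (Subtype.ext h))
  refine ⟨fun i => (g i).1.1, fun i => (g i).1.2, ?_, ?_, fun i => (hS.crossing _ (g i).2).1,
    fun i => varsCNF_graphCNF hF ▸ (hS.crossing _ (g i).2).2.1,
    fun i => (pair_mem_graphCNF_iff hF).mpr (hS.crossing _ (g i).2).2.2, fun i j hij => ?_⟩
  · exact fun i j h => g.injective (Subtype.ext (hS.injOn_fst (g i).2 (g j).2 h))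
  · exact fun i j h => g.injective (Subtype.ext (hS.injOn_snd (g i).2 (g j).2 h))
  · simp only [pair_mem_graphCNF_iff hF]
    exact hS.independent _ (g i).2 _ (g j).2 (hg i j hij)

lemma insert (hS : IsProductiveFamily Eg P S) {b u : Var} (hb : b ∈ P) (hu : u ∈ verts Eg \ P)
    (hbu : ({b, u} : Finset Var) ∈ Eg)
    (hfree : ∀ x ∈ S, ({x.1, b} : Finset Var) ∉ Eg ∧ ({x.2, b} : Finset Var) ∉ Eg ∧
      ({x.1, u} : Finset Var) ∉ Eg) :
    IsProductiveFamily Eg P (insert (b, u) S) := by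
  refine ⟨?_, ?_⟩
  · simp only [mem_insert, forall_eq_or_imp]
    exact ⟨⟨hb, hu, hbu⟩, hS.crossing⟩
  · simp only [mem_insert, forall_eq_or_imp]
    refine ⟨⟨fun h => absurd rfl h, fun y hy _ => ?_⟩,
      fun x hx => ⟨fun _ => ?_, hS.independent x hx⟩⟩
    · rw [pair_comm b, pair_comm b]
      exact ⟨(hfree y hy).1, (hfree y hy).2.1⟩
    · exact ⟨(hfree x hx).1, (hfree x hx).2.2⟩

end IsProductiveFamily

section Expansion

variable {Eg : Finset (Finset Var)}

lemma exists_maximal_isProductiveFamily (P : Finset Var) :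
    ∃ S, IsProductiveFamily Eg P S ∧ IsSaturated Eg P S := by
  classical
  set families := (P ×ˢ (verts Eg \ P)).powerset.filter (IsProductiveFamily Eg P)
  have mem_families : ∀ {S}, IsProductiveFamily Eg P S → S ∈ families := fun {S} hS =>
    mem_filter.mpr ⟨mem_powerset.mpr fun x hx =>
      mem_product.mpr ⟨(hS.crossing x hx).1, (hS.crossing x hx).2.1⟩, hS⟩
  obtain ⟨S, hSmem, hSmax⟩ := exists_max_image families card
    ⟨∅, mem_families ⟨by simp, by simp⟩⟩
  have hS := (mem_filter.mp hSmem).2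
  refine ⟨S, hS, fun b hb u hu hbu => ?_⟩
  by_contra! hfree
  have hbuS : (b, u) ∉ S := fun h => (hfree _ h).2.2 hbu
  have := hSmax _ (mem_families (hS.insert hb hu hbu hfree))
  rw [card_insert_of_notMem hbuS] at this
  omega

-- `B` and `U` are to be the neighbourhoods of the `a_i` and of the `u_i` of a maximal family.
lemma nbhd_sdiff_subset {P B U : Finset Var}
    (hstuck : ∀ b ∈ P, ∀ u ∈ verts Eg \ P, ({b, u} : Finset Var) ∈ Eg → b ∈ B ∨ b ∈ U ∨ u ∈ B) :
    nbhd Eg ((verts Eg \ P) \ B) ⊆ B ∪ U := by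
  intro v hv
  simp only [nbhd, mem_filter, mem_sdiff] at hv
  obtain ⟨hvV, hvQ, w, ⟨hwQ, hwB⟩, hvw⟩ := hv
  rw [mem_union]
  by_cases hvP : v ∈ P
  · rcases hstuck v hvP w (mem_sdiff.mpr hwQ) hvw with h | h | h
    exacts [.inl h, .inr h, absurd h hwB]
  · exact .inl (by_contra fun hvB => hvQ ⟨⟨hvV, hvP⟩, hvB⟩)

lemma min_one_mul_card_le_of_maximal {P : Finset Var} {S : Finset (Var × Var)} {d : ℕ} {a : ℝ}
    (hnbr : ∀ v, (nbr Eg v).card ≤ d)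
    (hexpand : ∀ W ⊆ verts Eg \ P, a * W.card ≤ (nbhd Eg W).card)
    (hmax : IsSaturated Eg P S) :
    min 1 a * (verts Eg \ P).card ≤ 3 * d * S.card := by
  classical
  set Q := verts Eg \ P
  set B := S.biUnion (fun x => nbr Eg x.1)
  set U := S.biUnion (fun x => nbr Eg x.2)
  have hB : (B.card : ℝ) ≤ d * S.card := by
    rw [mul_comm]
    exact_mod_cast card_biUnion_le_card_mul S (fun x => nbr Eg x.1) d fun x _ => hnbr x.1
  have hU : (U.card : ℝ) ≤ d * S.card := by
    rw [mul_comm]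
    exact_mod_cast card_biUnion_le_card_mul S (fun x => nbr Eg x.2) d fun x _ => hnbr x.2
  have hstuck : ∀ b ∈ P, ∀ u ∈ Q, ({b, u} : Finset Var) ∈ Eg → b ∈ B ∨ b ∈ U ∨ u ∈ B := by
    intro b hb u hu hbu
    obtain ⟨x, hx, h⟩ := hmax b hb u hu hbu
    simp only [B, U, mem_biUnion, mem_nbr]
    rcases h with h | h | h
    exacts [.inl ⟨x, hx, h⟩, .inr (.inl ⟨x, hx, h⟩), .inr (.inr ⟨x, hx, h⟩)]
  have hfar : a * (Q \ B).card ≤ B.card + U.card := by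
    refine (hexpand _ sdiff_subset).trans ?_
    exact_mod_cast (card_le_card (nbhd_sdiff_subset hstuck)).trans (card_union_le _ _)
  have hQ : (Q.card : ℝ) ≤ (Q \ B).card + B.card := by exact_mod_cast card_le_card_sdiff_add_card
  rcases le_total (min 1 a) 0 with hα0 | hα0
  · nlinarith [mul_nonpos_of_nonpos_of_nonneg hα0 (Nat.cast_nonneg (α := ℝ) Q.card)]
  calc min 1 a * Q.card ≤ min 1 a * (Q \ B).card + min 1 a * B.card := by nlinarith
    _ ≤ a * (Q \ B).card + B.card := by
      gcongr
      exacts [min_le_right _ _, mul_le_of_le_one_left (Nat.cast_nonneg _) (min_le_left _ _)]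
    _ ≤ 3 * d * S.card := by linarith

end Expansion

lemma SubfunProductive.le_card {F : CNF} {P : Finset Var} {e : ℕ} (h : SubfunProductive F P e) :
    e ≤ P.card := by
  obtain ⟨a, -, ha, -, haP, -⟩ := h
  simpa using card_le_card_of_injOn (s := univ) a (fun i _ => haP i) ha.injOn

lemma le_sfw {F : CNF} {m : ℕ}
    (h : ∀ σ : List Var, σ.Nodup → σ.toFinset = varsCNF F →
      ∃ i ∈ Icc 1 σ.length, ∃ e, m ≤ e ∧ SubfunProductive F (σ.take i).toFinset e) :
    m ≤ sfw F := by
  refine le_csInf ⟨_, (varsCNF F).toList, nodup_toList _, toList_toFinset _, rfl⟩ ?_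
  rintro _ ⟨σ, hnd, hσ, rfl⟩
  obtain ⟨i, hi, e, hme, he⟩ := h σ hnd hσ
  exact hme.trans ((le_csSup (s := { e | SubfunProductive F ((σ.take i).toFinset) e })
    ⟨_, fun _ h => SubfunProductive.le_card h⟩ he).trans
    (le_sup (f := fun i => sSup { e | SubfunProductive F ((σ.take i).toFinset) e }) hi))

-- `α n ≤ α (2 ⌊n/2⌋ + 1) ≤ 6 d k + 1 ≤ 8 d k`, the last step because `d k ≥ 1`.
lemma div_mul_le_of_mul_half_le {α : ℝ} {n d k : ℕ} (hα0 : 0 < α) (hα1 : α ≤ 1) (hn : 2 ≤ n)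
    (h : α * (n / 2 : ℕ) ≤ 3 * d * k) : α / (8 * d) * n ≤ k := by
  have hhalf : (n : ℝ) ≤ 2 * (n / 2 : ℕ) + 1 := by exact_mod_cast (by omega : n ≤ 2 * (n / 2) + 1)
  have hdk : 0 < d * k := by
    have : (1 : ℝ) ≤ (n / 2 : ℕ) := by exact_mod_cast (by omega : 1 ≤ n / 2)
    exact_mod_cast (by nlinarith : (0 : ℝ) < d * k)
  have hd : (0 : ℝ) < d := by exact_mod_cast Nat.pos_of_mul_pos_right hdk
  rw [div_mul_eq_mul_div, div_le_iff₀ (by positivity)]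
  nlinarith [(by exact_mod_cast hdk : (1 : ℝ) ≤ d * k)]

theorem expander_sfw_lower_bound_general (Eg : Finset (Finset Var)) (n d : ℕ) (a : ℝ)
    (hexp : IsExpander Eg n d a) (hn : 2 ≤ n) (ha : 0 < a)
    (F : CNF) (hF : F = Eg.image (fun e => e.image (fun v => (v, true)))) :
    (min 1 a / (8 * d)) * n ≤ (sfw F : ℝ) := by
  obtain ⟨hcard, h2, hdeg, hexpand⟩ := hexp
  refine (Nat.le_ceil _).trans (Nat.cast_le.mpr (le_sfw fun σ hnd hσ => ?_))
  rw [varsCNF_graphCNF hF] at hσ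
  have hlen : σ.length = n := by rw [← List.toFinset_card_of_nodup hnd, hσ, hcard]
  set P := (σ.take (n - n / 2)).toFinset
  have hP : P ⊆ verts Eg := fun x hx =>
    hσ ▸ List.mem_toFinset.mpr ((List.take_sublist _ _).subset (List.mem_toFinset.mp hx))
  have hQ : (verts Eg \ P).card = n / 2 := by
    rw [card_sdiff_of_subset hP, hcard,
      List.toFinset_card_of_nodup (hnd.sublist (List.take_sublist _ _)), List.length_take, hlen]
    omega
  obtain ⟨S, hS, hmax⟩ := exists_maximal_isProductiveFamily (Eg := Eg) P
  have hexpandQ : ∀ W ⊆ verts Eg \ P, a * W.card ≤ (nbhd Eg W).card := fun W hW =>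
    hexpand W (hW.trans sdiff_subset)
      ((Nat.cast_le.mpr (hQ ▸ card_le_card hW)).trans (by exact_mod_cast Nat.cast_div_le))
  have hbound := min_one_mul_card_le_of_maximal (card_nbr_le h2 hdeg) hexpandQ hmax
  refine ⟨n - n / 2, mem_Icc.mpr ⟨by omega, by omega⟩, S.card, ?_, hS.subfunProductive hF⟩
  rw [hQ] at hbound
  exact Nat.ceil_le.mpr
    (div_mul_le_of_mul_half_le (lt_min one_pos ha) (min_le_left _ _) hn hbound)

/-- the graph CNF of an (n,d,a)-expander (n ≥ 2, d ≥ 3, a > 0) has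
subfunction width at least (min{1,a}/(8d))·n. -/
theorem expander_sfw_lower_bound (Eg : Finset (Finset Var)) (n d : ℕ) (a : ℝ)
    (hexp : IsExpander Eg n d a) (hn : 2 ≤ n) (hd : 3 ≤ d) (ha : 0 < a)
    (F : CNF) (hF : F = Eg.image (fun e => e.image (fun v => (v, true)))) :
    (min 1 a / (8 * d)) * n ≤ (sfw F : ℝ) :=
  expander_sfw_lower_bound_general Eg n d a hexp hn ha F hF
end

section
/- Let F be a graph CNF on an (n,d,a)-expander with d ≥ 3, a > 0, n ≥ 2. Then the OBDD size of F is at least 2^{c·size(F)} where c = min{1,a}/(16d²) and size(F) = Σ_{e∈F}|e| = 2|F|. -/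
/-!
Fix the order `σ` of an OBDD for `F` and a cut after its first `p` variables. Suppose the clauses
`{aᵢ, uᵢ}` (`i < e`) of `F` have `aᵢ` before and `uᵢ` behind the cut, and no `aᵢaⱼ` or `aᵢuⱼ`
(`i ≠ j`) is a clause. For `S ⊆ {0, …, e - 1}` set `aⱼ` false iff `j ∉ S`, and everything else
before the cut true; completing this by making every variable behind the cut true except `uᵢ`
satisfies `F` iff `i ∈ S`. So the `2 ^ e` prefixes reach pairwise different nodes at the cut.

For an `(n, d, a)`-expander cut after `⌈n/2⌉` variables, the `⌊n/2⌋` vertices behind the cut have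
at least `a⌊n/2⌋` neighbours in front of it, each with a partner behind it. A neighbour `w`
conflicts with `v` if it is adjacent to `v` or to the partner of `v`; conflicts have out-degree at
most `2d`, so a greedily chosen conflict-free set keeps a `1/(4d+1)` fraction of them. With
`size F ≤ d n` this yields `e ≥ c · size F`.
-/

open Finset

theorem List.get_mem_toFinset_take {σ : List Var} {p : ℕ} {j : Fin σ.length} (hj : j.1 < p) :
    σ.get j ∈ (σ.take p).toFinset := by
  rw [List.mem_toFinset, List.mem_iff_getElem]
  exact ⟨j.1, by simp [hj], by simp⟩

theorem List.get_notMem_toFinset_take {σ : List Var} (hnd : σ.Nodup) {p : ℕ}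
    {j : Fin σ.length} (hj : p ≤ j.1) : σ.get j ∉ (σ.take p).toFinset := by
  rw [List.mem_toFinset, List.mem_iff_getElem]
  rintro ⟨k, hk, hkj⟩
  simp only [List.length_take, lt_min_iff] at hk
  rw [List.getElem_take, List.get_eq_getElem, hnd.getElem_inj_iff] at hkj
  omega

namespace OBDD

variable {σ : List Var} (D : OBDD σ)

def walk (p : ℕ) (f : Var → Bool) : ℕ → Fin D.size → Fin D.size
  | 0, v => v
  | n + 1, v => match D.label v with
    | .inr _ => v
    | .inl j => if j.1 < p then walk p f n (D.succ v (f (σ.get j))) else v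

theorem evalAux_of_label_inr (f : Var → Bool) (n : ℕ) {v : Fin D.size} {b : Bool}
    (h : D.label v = .inr b) : D.evalAux f n v = b := by
  cases n <;> simp [evalAux, h]

theorem evalAux_congr_fuel (f : Var → Bool) {n m : ℕ} {v : Fin D.size}
    (hn : ∀ k, D.label v = .inl k → σ.length ≤ k.1 + n)
    (hm : ∀ k, D.label v = .inl k → σ.length ≤ k.1 + m) :
    D.evalAux f n v = D.evalAux f m v := by
  induction n generalizing m v with
  | zero =>
    cases h : D.label v with
    | inr b => rw [D.evalAux_of_label_inr f m h, D.evalAux_of_label_inr f 0 h]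
    | inl k => exact absurd (hn k h) (by omega)
  | succ n ih =>
    cases h : D.label v with
    | inr b => rw [D.evalAux_of_label_inr f m h, D.evalAux_of_label_inr f _ h]
    | inl k =>
      cases m with
      | zero => exact absurd (hm k h) (by omega)
      | succ m =>
        simp only [evalAux, h]
        have hlt := D.ordered v k h (f (σ.get k))
        apply ih <;> intro k' hk' <;> have := hlt k' hk'
        · have := hn k h; omega
        · have := hm k h; omega

theorem evalAux_eq_of_length_le (f : Var → Bool) {n m : ℕ} (v : Fin D.size)
    (hn : σ.length ≤ n) (hm : σ.length ≤ m) : D.evalAux f n v = D.evalAux f m v :=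
  D.evalAux_congr_fuel f (fun _ _ => by omega) (fun _ _ => by omega)

theorem evalAux_congr (t : ℕ) {f g : Var → Bool}
    (hfg : ∀ j : Fin σ.length, t ≤ j.1 → f (σ.get j) = g (σ.get j)) (n : ℕ) {v : Fin D.size}
    (hv : ∀ k, D.label v = .inl k → t ≤ k.1) : D.evalAux f n v = D.evalAux g n v := by
  induction n generalizing v with
  | zero => cases h : D.label v <;> simp [evalAux, h]
  | succ n ih =>
    cases h : D.label v with
    | inr b => simp [evalAux, h]
    | inl k =>
      simp only [evalAux, h]
      rw [hfg k (hv k h)]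
      refine ih fun k' hk' => ?_
      have := D.ordered v k h _ k' hk'
      have := hv k h
      omega

theorem walk_congr (p : ℕ) {f g : Var → Bool}
    (hfg : ∀ j : Fin σ.length, j.1 < p → f (σ.get j) = g (σ.get j)) (n : ℕ) (v : Fin D.size) :
    D.walk p f n v = D.walk p g n v := by
  induction n generalizing v with
  | zero => rfl
  | succ n ih =>
    cases h : D.label v with
    | inr b => simp [walk, h]
    | inl k =>
      by_cases hk : k.1 < p
      · simp only [walk, h, hk, if_true, hfg k hk, ih]
      · simp [walk, h, hk]

theorem exists_label_add_le_of_walk_label (p : ℕ) (f : Var → Bool) (n : ℕ) (v : Fin D.size)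
    (j : Fin σ.length) (hj : D.label (D.walk p f n v) = .inl j) (hjp : j.1 < p) :
    ∃ k : Fin σ.length, D.label v = .inl k ∧ k.1 + n ≤ j.1 := by
  induction n generalizing v with
  | zero => exact ⟨j, hj, le_refl _⟩
  | succ n ih =>
    cases h : D.label v with
    | inr b => simp [walk, h] at hj
    | inl k =>
      by_cases hk : k.1 < p
      · simp only [walk, h, hk, if_true] at hj
        obtain ⟨k', hk', hle⟩ := ih _ hj
        have := D.ordered v k h _ k' hk'
        exact ⟨k, rfl, by omega⟩
      · simp only [walk, h, hk, if_false, Sum.inl.injEq] at hj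
        exact absurd (hj ▸ hjp) hk

theorem evalAux_add_eq_evalAux_walk (p : ℕ) (f : Var → Bool) (n : ℕ) {m : ℕ}
    (hm : σ.length ≤ m) (v : Fin D.size) :
    D.evalAux f (n + m) v = D.evalAux f m (D.walk p f n v) := by
  induction n generalizing v with
  | zero => rw [Nat.zero_add]; rfl
  | succ n ih =>
    cases h : D.label v with
    | inr b =>
      simp only [walk, h]
      exact D.evalAux_eq_of_length_le f v (by omega) hm
    | inl k =>
      by_cases hk : k.1 < p
      · simp only [walk, h, hk, if_true]
        rw [show n + 1 + m = (n + m) + 1 by omega]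
        simp only [evalAux, h]
        exact ih _
      · simp only [walk, h, hk, if_false]
        exact D.evalAux_eq_of_length_le f v (by omega) hm

/-- The node at which the computation path of `f` leaves the first `p` levels of the order. -/
def profile (p : ℕ) (f : Var → Bool) : Fin D.size :=
  D.walk p f (σ.length + 1) D.source

theorem le_of_label_profile (p : ℕ) (f : Var → Bool) (j : Fin σ.length)
    (hj : D.label (D.profile p f) = .inl j) : p ≤ j.1 := by
  by_contra hlt
  obtain ⟨k, _, hle⟩ :=
    D.exists_label_add_le_of_walk_label p f (σ.length + 1) D.source j hj (by omega)
  omega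

theorem eval_eq_evalAux_profile (p : ℕ) (f : Var → Bool) :
    D.eval f = D.evalAux f (σ.length + 1) (D.profile p f) := by
  rw [profile, ← D.evalAux_add_eq_evalAux_walk p f _ le_self_add, eval]
  exact D.evalAux_eq_of_length_le f _ (by omega) (by omega)

theorem eval_piecewise_eq_of_profile_eq (hnd : σ.Nodup) {p : ℕ} {f g : Var → Bool}
    (h : D.profile p f = D.profile p g) (r : Var → Bool) :
    D.eval ((σ.take p).toFinset.piecewise f r) = D.eval ((σ.take p).toFinset.piecewise g r) := by
  have hprofile : ∀ f, D.profile p ((σ.take p).toFinset.piecewise f r) = D.profile p f :=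
    fun f => D.walk_congr p (fun j hj => piecewise_eq_of_mem _ _ _
      (List.get_mem_toFinset_take hj)) _ _
  rw [D.eval_eq_evalAux_profile p, D.eval_eq_evalAux_profile p, hprofile, hprofile, h]
  refine D.evalAux_congr p (fun j hj => ?_) _ (D.le_of_label_profile p g)
  rw [piecewise_eq_of_notMem _ _ _ (List.get_notMem_toFinset_take hnd hj),
    piecewise_eq_of_notMem _ _ _ (List.get_notMem_toFinset_take hnd hj)]

theorem card_le_size_of_fooling (hnd : σ.Nodup) (p : ℕ) {ι : Type*} [Fintype ι]
    (x : ι → Var → Bool)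
    (hfool : ∀ S T, S ≠ T → ∃ r, D.eval ((σ.take p).toFinset.piecewise (x S) r) ≠
      D.eval ((σ.take p).toFinset.piecewise (x T) r)) :
    Fintype.card ι ≤ D.size := by
  have hinj : Function.Injective fun S => D.profile p (x S) := by
    intro S T h
    by_contra hne
    obtain ⟨r, hr⟩ := hfool S T hne
    exact hr (D.eval_piecewise_eq_of_profile_eq hnd h r)
  simpa using Fintype.card_le_of_injective _ hinj

end OBDD

section SubfunProductive

variable {e : ℕ} (P : Finset Var) (a u : Fin e → Var)

def prefixAssignment (S : Finset (Fin e)) (v : Var) : Bool :=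
  decide (∀ j, a j = v → j ∈ S)

def foolingAssignment (S : Finset (Fin e)) (i : Fin e) : Var → Bool :=
  P.piecewise (prefixAssignment a S) (Function.update (fun _ => true) (u i) false)

variable {P a u}

theorem exists_or_eq_of_foolingAssignment_eq_false {S : Finset (Fin e)} {i : Fin e} {z : Var}
    (hz : foolingAssignment P a u S i z = false) : (∃ j ∉ S, a j = z) ∨ z = u i := by
  unfold foolingAssignment at hz
  by_cases hzP : z ∈ P
  · rw [piecewise_eq_of_mem _ _ _ hzP, prefixAssignment, decide_eq_false_iff_not] at hz
    push Not at hz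
    obtain ⟨j, hj, hjS⟩ := hz
    exact Or.inl ⟨j, hjS, hj⟩
  · rw [piecewise_eq_of_notMem _ _ _ hzP] at hz
    by_contra hzu
    simp [Function.update_of_ne (not_or.mp hzu).2] at hz

theorem satCNF_foolingAssignment {F : CNF} (hF : GraphCNF F)
    (hsep : ∀ i j, i ≠ j →
      ({(a i, true), (a j, true)} : Clause) ∉ F ∧ ({(a i, true), (u j, true)} : Clause) ∉ F)
    {S : Finset (Fin e)} {i : Fin e} (hi : i ∈ S) :
    satCNF F (foolingAssignment P a u S i) := by
  intro c hc
  obtain ⟨v, w, hvw, rfl⟩ := hF c hc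
  by_contra hfalse
  simp only [mem_insert, mem_singleton, exists_eq_or_imp, exists_eq_left,
    Bool.not_eq_true, not_or] at hfalse
  rcases exists_or_eq_of_foolingAssignment_eq_false hfalse.1 with ⟨j, hj, rfl⟩ | rfl <;>
    rcases exists_or_eq_of_foolingAssignment_eq_false hfalse.2 with ⟨k, hk, rfl⟩ | rfl
  · exact (hsep j k (fun hjk => hvw (hjk ▸ rfl))).1 hc
  · exact (hsep j i (fun hji => hj (hji ▸ hi))).2 hc
  · exact (hsep k i (fun hki => hk (hki ▸ hi))).2 (by rwa [pair_comm])
  · exact hvw rfl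

theorem not_satCNF_foolingAssignment {F : CNF} {i : Fin e}
    (hedge : ({(a i, true), (u i, true)} : Clause) ∈ F) (ha : a i ∈ P) (hu : u i ∉ P)
    {S : Finset (Fin e)} (hi : i ∉ S) :
    ¬ satCNF F (foolingAssignment P a u S i) := by
  intro hsat
  obtain ⟨l, hl, hfl⟩ := hsat _ hedge
  simp only [mem_insert, mem_singleton] at hl
  rcases hl with rfl | rfl
  · simp only [foolingAssignment, piecewise_eq_of_mem _ _ _ ha, prefixAssignment,
      decide_eq_true_eq] at hfl
    exact hi (hfl i rfl)
  · simp [foolingAssignment, piecewise_eq_of_notMem _ _ _ hu] at hfl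

theorem OBDD.two_pow_le_size_of_subfunProductive {σ : List Var} (hnd : σ.Nodup)
    (D : OBDD σ) {F : CNF} (hF : GraphCNF F) (hD : D.computes F) {p : ℕ}
    (h : SubfunProductive F (σ.take p).toFinset e) : 2 ^ e ≤ D.size := by
  obtain ⟨a, u, -, -, ha, hu, hedge, hsep⟩ := h
  set P := (σ.take p).toFinset
  have heval : ∀ S T i, i ∈ S → i ∉ T → D.eval (foolingAssignment P a u S i) = true ∧
      D.eval (foolingAssignment P a u T i) = false := fun S T i hS hT =>
    ⟨(hD _).2 (satCNF_foolingAssignment hF hsep hS),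
      Bool.eq_false_iff.2 fun h => not_satCNF_foolingAssignment (hedge i) (ha i)
        (mem_sdiff.1 (hu i)).2 hT ((hD _).1 h)⟩
  have := D.card_le_size_of_fooling hnd p (prefixAssignment a) fun S T hST => by
    obtain ⟨i, hi⟩ := not_forall.1 (mt Finset.ext hST)
    refine ⟨Function.update (fun _ => true) (u i) false, ?_⟩
    change D.eval (foolingAssignment P a u S i) ≠ D.eval (foolingAssignment P a u T i)
    by_cases hS : i ∈ S
    · have hT : i ∉ T := fun hT => hi (iff_of_true hS hT)
      rw [(heval S T i hS hT).1, (heval S T i hS hT).2]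
      decide
    · have hT : i ∈ T := by tauto
      rw [(heval T S i hT hS).1, (heval T S i hT hS).2]
      decide
  simpa using this

end SubfunProductive

section Greedy

variable {α : Type*} [DecidableEq α] (r : α → α → Prop) [DecidableRel r] {K : ℕ}

/-- Out-degrees average to in-degrees, so some vertex has total degree at most `2 K`. -/
theorem exists_card_filter_or_le {S : Finset α} (hS : S.Nonempty)
    (hK : ∀ v ∈ S, #(S.filter (r v)) ≤ K) :
    ∃ v ∈ S, #(S.filter fun w => r v w ∨ r w v) ≤ 2 * K := by
  refine exists_le_of_sum_le hS ?_
  calc ∑ v ∈ S, #(S.filter fun w => r v w ∨ r w v)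
      ≤ ∑ v ∈ S, (#(S.filter (r v)) + #(S.filter fun w => r w v)) :=
        sum_le_sum fun v _ => (filter_or (r v) (fun w => r w v) S).symm ▸ card_union_le _ _
    _ = 2 * ∑ v ∈ S, #(S.filter (r v)) := by
        rw [sum_add_distrib, two_mul]
        congr 1
        simp only [card_filter]
        exact sum_comm
    _ ≤ ∑ _v ∈ S, 2 * K := by rw [← mul_sum]; exact Nat.mul_le_mul_left 2 (sum_le_sum hK)

theorem exists_subset_pairwise_not_card_le (S : Finset α)
    (hK : ∀ v ∈ S, #(S.filter (r v)) ≤ K) :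
    ∃ T ⊆ S, (T : Set α).Pairwise (fun v w => ¬ r v w) ∧ #S ≤ (2 * K + 1) * #T := by
  induction S using Finset.strongInduction with | H S ih => ?_
  rcases S.eq_empty_or_nonempty with rfl | hne
  · exact ⟨∅, empty_subset _, by simp, by simp⟩
  obtain ⟨v, hv, hvdeg⟩ := exists_card_filter_or_le r hne hK
  set R := insert v (S.filter fun w => r v w ∨ r w v)
  have hRS : S \ R ⊂ S := sdiff_ssubset (insert_subset hv (filter_subset _ _)) (insert_nonempty _ _)
  obtain ⟨T, hTS, hT, hTcard⟩ := ih (S \ R) hRS fun w hw =>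
    (card_le_card (filter_subset_filter _ sdiff_subset)).trans (hK w (sdiff_subset hw))
  have hvT : ∀ w ∈ T, w ≠ v ∧ ¬ r v w ∧ ¬ r w v := fun w hw => by
    have := mem_sdiff.1 (hTS hw)
    simp only [R, mem_insert, mem_filter, not_or, not_and] at this
    exact ⟨this.2.1, this.2.2 this.1⟩
  refine ⟨insert v T, insert_subset hv (hTS.trans sdiff_subset), ?_, ?_⟩
  · rw [coe_insert, Set.pairwise_insert]
    exact ⟨hT, fun w hw _ => ⟨(hvT w hw).2.1, (hvT w hw).2.2⟩⟩
  · have hvT' : v ∉ T := fun h => (hvT v h).1 rfl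
    calc #S ≤ #(S \ R) + #R := card_le_card_sdiff_add_card
      _ ≤ (2 * K + 1) * #T + (2 * K + 1) :=
        add_le_add hTcard ((card_insert_le _ _).trans (by omega))
      _ = (2 * K + 1) * #(insert v T) := by rw [card_insert_of_notMem hvT']; ring

end Greedy

section Expander

def edgeCNF (Eg : Finset (Finset Var)) : CNF :=
  Eg.image fun e => e.image fun v => (v, true)

variable {Eg : Finset (Finset Var)}

theorem pair_mem_edgeCNF_iff {x y : Var} :
    ({(x, true), (y, true)} : Clause) ∈ edgeCNF Eg ↔ {x, y} ∈ Eg := by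
  have hinj : Function.Injective fun e : Finset Var => e.image fun v => (v, true) :=
    image_injective fun v w h => (Prod.mk.inj h).1
  rw [edgeCNF, ← hinj.mem_finset_image (s := Eg) (a := {x, y})]
  simp [image_insert]

theorem graphCNF_edgeCNF (hEg : ∀ e ∈ Eg, #e = 2) : GraphCNF (edgeCNF Eg) := by
  intro c hc
  obtain ⟨e, he, rfl⟩ := mem_image.1 hc
  obtain ⟨x, y, hxy, rfl⟩ := card_eq_two.1 (hEg e he)
  exact ⟨x, y, hxy, by simp [image_insert]⟩

theorem varsCNF_edgeCNF : varsCNF (edgeCNF Eg) = verts Eg := by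
  rw [edgeCNF, varsCNF, sup_image, verts]
  refine sup_congr rfl fun e _ => ?_
  simp [varsClause, image_image, Function.comp_def]

theorem sizeCNF_edgeCNF : sizeCNF (edgeCNF Eg) = ∑ e ∈ Eg, #e := by
  have hinj : Function.Injective fun v : Var => (v, true) := fun v w h => (Prod.mk.inj h).1
  rw [sizeCNF, edgeCNF, sum_image fun e _ e' _ h => image_injective hinj h]
  exact sum_congr rfl fun e _ => card_image_of_injective e hinj

theorem sum_card_le_mul_card_verts {d : ℕ} (hdeg : ∀ v ∈ verts Eg, #(Eg.filter (v ∈ ·)) ≤ d) :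
    ∑ e ∈ Eg, #e ≤ d * #(verts Eg) := by
  calc ∑ e ∈ Eg, #e = ∑ e ∈ Eg, #((verts Eg).filter (· ∈ e)) :=
        sum_congr rfl fun e he => by
          have : e ⊆ verts Eg := le_sup (f := id) he
          rw [filter_mem_eq_inter, inter_eq_right.2 this]
    _ = ∑ v ∈ verts Eg, #(Eg.filter (v ∈ ·)) := by
        simp only [card_filter]
        exact sum_comm
    _ ≤ d * #(verts Eg) := by simpa [mul_comm] using sum_le_sum hdeg

theorem card_filter_pair_mem_le (S : Finset Var) (z : Var) :
    #(S.filter fun w => {z, w} ∈ Eg) ≤ #(Eg.filter (z ∈ ·)) := by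
  refine card_le_card_of_injOn (fun w => {z, w}) (fun w hw => ?_) fun w _ w' _ h => ?_
  · simp only [coe_filter, Set.mem_ofPred_eq] at hw ⊢
    exact ⟨hw.2, mem_insert_self _ _⟩
  · replace h : ({z, w} : Finset Var) = {z, w'} := h
    have h1 : w ∈ ({z, w'} : Finset Var) := h ▸ by simp
    have h2 : w' ∈ ({z, w} : Finset Var) := h ▸ by simp
    simp only [mem_insert, mem_singleton] at h1 h2
    grind

theorem exists_subfunProductive_of_forall_exists_edge {d : ℕ}
    (hdeg : ∀ v ∈ verts Eg, #(Eg.filter (v ∈ ·)) ≤ d) {P A : Finset Var} (hAP : A ⊆ P)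
    (hpartner : ∀ v ∈ A, ∃ w ∈ verts Eg \ P, {v, w} ∈ Eg) :
    ∃ e, SubfunProductive (edgeCNF Eg) P e ∧ #A ≤ (4 * d + 1) * e := by
  choose! ψ hψ hψE using hpartner
  obtain ⟨T, hTA, hT, hTcard⟩ := exists_subset_pairwise_not_card_le
    (fun v w => {v, w} ∈ Eg ∨ {w, ψ v} ∈ Eg) (K := 2 * d) A fun v hv => by
      rw [filter_or, two_mul]
      refine (card_union_le _ _).trans (add_le_add ?_ ?_)
      · exact (card_filter_pair_mem_le A v).trans
          (hdeg v (le_sup (f := id) (hψE v hv) (mem_insert_self _ _)))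
      · simp only [pair_comm _ (ψ v)]
        exact (card_filter_pair_mem_le A (ψ v)).trans (hdeg _ (sdiff_subset (hψ v hv)))
  set af : Fin #T → Var := fun i => T.equivFin.symm i
  have haf : ∀ i, af i ∈ A := fun i => hTA (T.equivFin.symm i).2
  have hafinj : Function.Injective af := fun i j h => T.equivFin.symm.injective (Subtype.ext h)
  have hsep : ∀ i j, i ≠ j → {af i, af j} ∉ Eg ∧ {af j, ψ (af i)} ∉ Eg := fun i j hij =>
    not_or.1 (hT (T.equivFin.symm i).2 (T.equivFin.symm j).2 (hafinj.ne hij))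
  refine ⟨#T, ⟨af, ψ ∘ af, hafinj, fun i j h => ?_, fun i => hAP (haf i),
    fun i => ?_, fun i => ?_, fun i j hij => ?_⟩, ?_⟩
  · by_contra hij
    have : ψ (af i) = ψ (af j) := h
    exact (hsep i j hij).2 (this ▸ hψE _ (haf j))
  · rw [varsCNF_edgeCNF]
    exact hψ _ (haf i)
  · exact pair_mem_edgeCNF_iff.2 (hψE _ (haf i))
  · rw [pair_mem_edgeCNF_iff, pair_mem_edgeCNF_iff]
    exact ⟨(hsep i j hij).1, (hsep j i hij.symm).2⟩
  · rw [show 4 * d = 2 * (2 * d) by ring]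
    exact hTcard

theorem IsExpander.exists_subfunProductive {n d : ℕ} {a : ℝ} (hexp : IsExpander Eg n d a)
    {σ : List Var} (hnd : σ.Nodup) (hσ : σ.toFinset = verts Eg) :
    ∃ p e, SubfunProductive (edgeCNF Eg) (σ.take p).toFinset e ∧
      a * (n / 2 : ℕ) ≤ (4 * d + 1) * e := by
  obtain ⟨hcard, -, hdeg, hexpand⟩ := hexp
  set P := (σ.take (n - n / 2)).toFinset
  have hPsub : P ⊆ verts Eg :=
    hσ ▸ fun v hv => List.mem_toFinset.2 (List.mem_of_mem_take (List.mem_toFinset.1 hv))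
  have hlen : σ.length = n := by rw [← List.toFinset_card_of_nodup hnd, hσ, hcard]
  have hPcard : #P = n - n / 2 := by
    rw [List.toFinset_card_of_nodup (hnd.sublist (List.take_sublist _ _)), List.length_take]
    omega
  have hQcard : #(verts Eg \ P) = n / 2 := by
    rw [card_sdiff_of_subset hPsub, hPcard, hcard]
    omega
  have hA : a * (n / 2 : ℕ) ≤ #(nbhd Eg (verts Eg \ P)) := by
    rw [← hQcard]
    exact hexpand _ sdiff_subset (by rw [hQcard]; exact Nat.cast_div_le)
  have hAP : nbhd Eg (verts Eg \ P) ⊆ P := fun v hv => by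
    obtain ⟨hv, hvQ, -⟩ := mem_filter.1 hv
    exact by_contra fun hvP => hvQ (mem_sdiff.2 ⟨hv, hvP⟩)
  obtain ⟨e, he, hAe⟩ := exists_subfunProductive_of_forall_exists_edge hdeg hAP
    fun v hv => (mem_filter.1 hv).2.2
  exact ⟨_, e, he, hA.trans (by exact_mod_cast hAe)⟩

end Expander

theorem expander_obdd_lower_bound_general (Eg : Finset (Finset Var)) (n d : ℕ) (a : ℝ)
    (hexp : IsExpander Eg n d a) (hn : 2 ≤ n) (ha : 0 < a)
    (F : CNF) (hF : F = Eg.image (fun e => e.image (fun v => (v, true))))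
    (σ : List Var) (hnd : σ.Nodup) (hv : σ.toFinset = varsCNF F)
    (D : OBDD σ) (hD : D.computes F) :
    (2 : ℝ) ^ ((min 1 a / (16 * (d : ℝ) ^ 2)) * (sizeCNF F : ℝ)) ≤ (D.size : ℝ) := by
  change F = edgeCNF Eg at hF
  subst hF
  rw [varsCNF_edgeCNF] at hv
  obtain ⟨p, e, hprod, hae⟩ := hexp.exists_subfunProductive hnd hv
  have h2e : 2 ^ e ≤ D.size :=
    D.two_pow_le_size_of_subfunProductive hnd (graphCNF_edgeCNF hexp.2.1) hD hprod
  have hsize : (sizeCNF (edgeCNF Eg) : ℝ) ≤ d * n := by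
    rw [sizeCNF_edgeCNF, ← hexp.1]
    exact_mod_cast sum_card_le_mul_card_verts hexp.2.2.1
  have hn3 : (n : ℝ) ≤ 3 * (n / 2 : ℕ) := by exact_mod_cast (by omega : n ≤ 3 * (n / 2))
  have hm : 0 ≤ min 1 a := le_min zero_le_one ha.le
  have hexponent : min 1 a / (16 * (d : ℝ) ^ 2) * sizeCNF (edgeCNF Eg) ≤ e := by
    rw [div_mul_eq_mul_div]
    refine div_le_of_le_mul₀ (by positivity) (by positivity) ?_
    calc min 1 a * sizeCNF (edgeCNF Eg) ≤ d * (min 1 a * n) := by nlinarith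
      _ ≤ d * (a * (3 * (n / 2 : ℕ))) := by gcongr; exact min_le_right 1 a
      _ ≤ 3 * d * ((4 * d + 1) * e) := by nlinarith
      _ ≤ e * (16 * d ^ 2) := by
        have hd : (d : ℝ) ≤ d ^ 2 := by exact_mod_cast Nat.le_self_pow two_ne_zero d
        nlinarith [mul_le_mul_of_nonneg_left hd (Nat.cast_nonneg e)]
  calc (2 : ℝ) ^ (min 1 a / (16 * (d : ℝ) ^ 2) * sizeCNF (edgeCNF Eg))
      ≤ 2 ^ (e : ℝ) := Real.rpow_le_rpow_of_exponent_le one_le_two hexponent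
    _ ≤ D.size := by exact_mod_cast h2e

/-- the graph CNF F of an (n,d,a)-expander (n ≥ 2, d ≥ 3, a > 0) has OBDD
size at least 2^(c·size(F)) where c = min{1,a}/(16d²): every OBDD computing F has at
least that many nodes. -/
theorem expander_obdd_lower_bound (Eg : Finset (Finset Var)) (n d : ℕ) (a : ℝ)
    (hexp : IsExpander Eg n d a) (hn : 2 ≤ n) (hd : 3 ≤ d) (ha : 0 < a)
    (F : CNF) (hF : F = Eg.image (fun e => e.image (fun v => (v, true))))
    (σ : List Var) (hnd : σ.Nodup) (hv : σ.toFinset = varsCNF F)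
    (D : OBDD σ) (hD : D.computes F) :
    (2 : ℝ) ^ ((min 1 a / (16 * (d : ℝ) ^ 2)) * (sizeCNF F : ℝ)) ≤ (D.size : ℝ) :=
  expander_obdd_lower_bound_general Eg n d a hexp hn ha F hF σ hnd hv D hD
end

section
/- Let F be a CNF with incidence graph of pathwidth k−1, σ a forget ordering, and π a prefix of σ; let v be the last variable of π and B the first bag containing v (in a witnessing path decomposition). Let C'' be the set of var(π)-active clauses occurring only in bags strictly after B. Then every variable of ⋃_{c ∈ C''} var(c) ∩ var(π) belongs to B. -/
/-- Vertices of the incidence graph of a CNF: variables and clauses. -/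
abbrev IVertex := Var ⊕ Clause

/-- P is a path decomposition of the incidence graph of F. -/
def IsPathDecomp (F : CNF) (P : List (Finset IVertex)) : Prop :=
  (∀ x ∈ varsCNF F, ∃ B ∈ P, Sum.inl x ∈ B) ∧
  (∀ c ∈ F, ∃ B ∈ P, Sum.inr c ∈ B) ∧
  (∀ c ∈ F, ∀ x ∈ varsClause c, ∃ B ∈ P, Sum.inl x ∈ B ∧ Sum.inr c ∈ B) ∧
  (∀ u : IVertex, ∀ i j k : ℕ, i ≤ j → j ≤ k →
    ∀ (hi : i < P.length) (hj : j < P.length) (hk : k < P.length),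
      u ∈ P.get ⟨i, hi⟩ → u ∈ P.get ⟨k, hk⟩ → u ∈ P.get ⟨j, hj⟩)

/-- Index of the first bag of P containing the vertex u. -/
def firstIdx (P : List (Finset IVertex)) (u : IVertex) : ℕ :=
  P.findIdx (fun B => decide (u ∈ B))

/-- σ is a forget ordering of var(F) with respect to the path decomposition P:
variables are ordered by the position of the first bag containing them. -/
def IsForgetOrdering (F : CNF) (P : List (Finset IVertex)) (σ : List Var) : Prop :=
  σ.Nodup ∧ σ.toFinset = varsCNF F ∧
    ∀ x ∈ varsCNF F, ∀ y ∈ varsCNF F,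
      firstIdx P (Sum.inl x) < firstIdx P (Sum.inl y) → σ.idxOf x < σ.idxOf y

/-!
The first bag containing `x ∈ var(π)` comes no later than the first bag `B` containing `v`,
because the forget ordering lists variables by their first bags and `v` is the last variable
of `π`. The clause `c` shares a bag with `x`, and that bag lies strictly after `B`. The bags
containing `x` form an interval, so `B` lies inside it.
-/

theorem firstIdx_lt_length {P : List (Finset IVertex)} {u : IVertex} {b : ℕ}
    (hb : b < P.length) (hu : u ∈ P[b]) : firstIdx P u < P.length :=
  List.findIdx_lt_length_of_exists ⟨P[b], List.getElem_mem hb, decide_eq_true hu⟩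

theorem mem_getElem_firstIdx {P : List (Finset IVertex)} {u : IVertex}
    (h : firstIdx P u < P.length) : u ∈ P[firstIdx P u] :=
  of_decide_eq_true (List.findIdx_getElem (w := h))

theorem mem_varsCNF_of_mem_varsClause {F : CNF} {c : Clause} {x : Var} (hc : c ∈ F)
    (hx : x ∈ varsClause c) : x ∈ varsCNF F :=
  Finset.mem_sup.mpr ⟨c, hc, hx⟩

theorem IsPathDecomp.mem_of_firstIdx_le_of_le {F : CNF} {P : List (Finset IVertex)}
    (hP : IsPathDecomp F P) {u : IVertex} {b j : ℕ}
    (hb : b < P.length) (hu : u ∈ P[b]) (hj : firstIdx P u ≤ j) (hjb : j ≤ b) :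
    u ∈ P[j] :=
  hP.2.2.2 u _ j b hj hjb (firstIdx_lt_length hb hu) (by omega) hb
    (mem_getElem_firstIdx (firstIdx_lt_length hb hu)) hu

theorem IsForgetOrdering.firstIdx_le_of_idxOf_le {F : CNF} {P : List (Finset IVertex)}
    {σ : List Var} (hσ : IsForgetOrdering F P σ) {x y : Var} (hx : x ∈ varsCNF F)
    (hy : y ∈ varsCNF F) (h : σ.idxOf x ≤ σ.idxOf y) :
    firstIdx P (Sum.inl x) ≤ firstIdx P (Sum.inl y) :=
  not_lt.mp fun hlt => (hσ.2.2 y hy x hx hlt).not_ge h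

theorem late_active_clause_vars_in_bag_general (F : CNF) (P : List (Finset IVertex))
    (σ : List Var) (hP : IsPathDecomp F P)
    (hσ : IsForgetOrdering F P σ)
    (i : ℕ) (hi : i < σ.length)
    (hfi : firstIdx P (Sum.inl (σ.get ⟨i, hi⟩)) < P.length)
    (c : Clause) (hc : c ∈ F)
    (hlate : ∀ j (hj : j < P.length), Sum.inr c ∈ P.get ⟨j, hj⟩ →
      firstIdx P (Sum.inl (σ.get ⟨i, hi⟩)) < j) :
    ∀ x ∈ varsClause c, x ∈ (σ.take (i+1)).toFinset →
      Sum.inl x ∈ P.get ⟨firstIdx P (Sum.inl (σ.get ⟨i, hi⟩)), hfi⟩ := by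
  intro x hxc hxπ
  have hvF : σ.get ⟨i, hi⟩ ∈ varsCNF F := hσ.2.1 ▸ List.mem_toFinset.mpr (List.get_mem σ _)
  have hxσ : x ∈ σ.take (i + 1) := List.mem_toFinset.mp hxπ
  have hx_before_v : σ.idxOf x ≤ σ.idxOf (σ.get ⟨i, hi⟩) := by
    rw [List.get_idxOf hσ.1]
    exact Nat.lt_succ_iff.mp ((List.mem_take_iff_idxOf_lt (List.mem_of_mem_take hxσ)).mp hxσ)
  obtain ⟨B, hBP, hxB, hcB⟩ := hP.2.2.1 c hc x hxc
  obtain ⟨m, hm, rfl⟩ := List.getElem_of_mem hBP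
  exact hP.mem_of_firstIdx_le_of_le hm hxB
    (hσ.firstIdx_le_of_idxOf_le (mem_varsCNF_of_mem_varsClause hc hxc) hvF hx_before_v)
    (hlate m hm hcB).le

/-- with v the last variable of prefix π and B the first bag containing v,
every var(π)-variable of a var(π)-active clause occurring only in bags strictly after B
belongs to B. -/
theorem late_active_clause_vars_in_bag (F : CNF) (k : ℕ) (P : List (Finset IVertex))
    (σ : List Var) (hP : IsPathDecomp F P) (hw : ∀ B ∈ P, B.card ≤ k)
    (hσ : IsForgetOrdering F P σ)
    (i : ℕ) (hi : i < σ.length)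
    (hfi : firstIdx P (Sum.inl (σ.get ⟨i, hi⟩)) < P.length)
    (c : Clause) (hc : c ∈ F)
    (hact : (varsClause c ∩ (σ.take (i+1)).toFinset).Nonempty ∧
            (varsClause c \ (σ.take (i+1)).toFinset).Nonempty)
    (hlate : ∀ j (hj : j < P.length), Sum.inr c ∈ P.get ⟨j, hj⟩ →
      firstIdx P (Sum.inl (σ.get ⟨i, hi⟩)) < j) :
    ∀ x ∈ varsClause c, x ∈ (σ.take (i+1)).toFinset →
      Sum.inl x ∈ P.get ⟨firstIdx P (Sum.inl (σ.get ⟨i, hi⟩)), hfi⟩ :=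
  late_active_clause_vars_in_bag_general F P σ hP hσ i hi hfi c hc hlate
end

section
/- Let F be a variable convex CNF with convexity ordering σ and prefix π. Let f : var(π) → {0,1} be an assignment not satisfying the set A of var(π)-active clauses. Then among the clauses of A not satisfied by f there is a unique one, t, whose restriction to literals on var(π) is inclusion-maximal, and the set of clauses of A not satisfied by f is exactly { c ∈ A : {l ∈ c : var(l) ∈ var(π)} ⊆ {l ∈ t : var(l) ∈ var(π)} }. -/
/-- σ witnesses left convexity of the incidence graph of F (variable convexity). -/
def ConvexWitness (F : CNF) (σ : List Var) : Prop :=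
  ∀ c ∈ F, ∀ v ∈ varsClause c, ∀ v' ∈ varsClause c, ∀ v'' ∈ σ.toFinset,
    σ.idxOf v < σ.idxOf v'' → σ.idxOf v'' < σ.idxOf v' → v'' ∈ varsClause c

/-!
By convexity, a clause that reaches beyond the prefix contains every prefix variable lying after
one of its own prefix variables, so the prefix variables of the active clauses are final segments
of the prefix and form a chain under inclusion. A clause not satisfied by `f` falsifies each of its
prefix literals, so its prefix literals are determined by its prefix variables; hence the prefix
restrictions of the unsatisfied active clauses form a nonempty finite chain, whose top element is
the required maximum. Conversely, a clause whose prefix restriction lies inside that of an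
unsatisfied clause is itself unsatisfied.
-/

theorem List.idxOf_lt_idxOf_of_mem_take_of_notMem_take {α : Type*} [BEq α] [LawfulBEq α]
    {l : List α} {n : ℕ} {a b : α} (ha : a ∈ l.take n) (hb : b ∉ l.take n) :
    l.idxOf a < l.idxOf b := by
  have hprefix := List.take_prefix n l
  have ha' := (hprefix.mem_iff_idxOf_lt_length a).1 ha
  have hb' := (hprefix.mem_iff_idxOf_lt_length b).not.1 hb
  omega

theorem Finset.exists_forall_subset_of_total {ι α : Type*} {S : Finset ι} (g : ι → Finset α)
    (hS : S.Nonempty) (htotal : ∀ a ∈ S, ∀ b ∈ S, g a ⊆ g b ∨ g b ⊆ g a) :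
    ∃ t ∈ S, ∀ c ∈ S, g c ⊆ g t := by
  obtain ⟨t, htS, htmax⟩ := S.exists_max_image (fun c => (g c).card) hS
  refine ⟨t, htS, fun c hc => ?_⟩
  rcases htotal c hc t htS with h | h
  · exact h
  · exact (Finset.eq_of_subset_of_card_le h (htmax c hc)).ge

section Convex

variable {F : CNF} {σ : List Var} {n : ℕ}

theorem ConvexWitness.mem_varsClause_of_idxOf_le (hconv : ConvexWitness F σ) {c : Clause}
    (hc : c ∈ F) (hout : (varsClause c \ (σ.take n).toFinset).Nonempty) {v u : Var}
    (hv : v ∈ varsClause c) (hu : u ∈ σ.take n) (hvu : σ.idxOf v ≤ σ.idxOf u) :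
    u ∈ varsClause c := by
  obtain ⟨w, hw⟩ := hout
  rw [Finset.mem_sdiff, List.mem_toFinset] at hw
  have huσ : u ∈ σ := List.mem_of_mem_take hu
  rcases hvu.eq_or_lt with heq | hlt
  · exact (List.idxOf_inj huσ).1 heq.symm ▸ hv
  · exact hconv c hc v hv w hw.1 u (List.mem_toFinset.2 huσ) hlt
      (List.idxOf_lt_idxOf_of_mem_take_of_notMem_take hu hw.2)

theorem ConvexWitness.varsClause_inter_take_total (hconv : ConvexWitness F σ) {c c' : Clause}
    (hc : c ∈ F) (hout : (varsClause c \ (σ.take n).toFinset).Nonempty)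
    (hc' : c' ∈ F) (hout' : (varsClause c' \ (σ.take n).toFinset).Nonempty) :
    varsClause c ∩ (σ.take n).toFinset ⊆ varsClause c' ∩ (σ.take n).toFinset ∨
      varsClause c' ∩ (σ.take n).toFinset ⊆ varsClause c ∩ (σ.take n).toFinset := by
  refine or_iff_not_imp_left.2 fun hnot => ?_
  obtain ⟨v, hv, hv'⟩ := Finset.not_subset.1 hnot
  rw [Finset.mem_inter, List.mem_toFinset] at hv
  intro u hu
  rw [Finset.mem_inter, List.mem_toFinset] at hu hv' ⊢
  have hvu : σ.idxOf v ≤ σ.idxOf u := by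
    by_contra! huv
    exact hv' ⟨hconv.mem_varsClause_of_idxOf_le hc' hout' hu.1 hv.2 huv.le, hv.2⟩
  exact ⟨hconv.mem_varsClause_of_idxOf_le hc hout hv.1 hu.2 hvu, hu.2⟩

end Convex

section Satisfaction

variable {X : Finset Var} {f : Var → Bool} {c : Clause}

theorem filter_mem_eq_image_of_not_satClauseOn (hc : ¬ satClauseOn X f c) :
    c.filter (fun l => l.1 ∈ X) = (varsClause c ∩ X).image (fun v => (v, !f v)) := by
  have hfalse : ∀ l ∈ c, l.1 ∈ X → l = (l.1, !f l.1) := fun l hl hlX => by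
    obtain ⟨v, b⟩ := l
    cases b <;> cases hfv : f v <;> simp_all [satClauseOn]
  ext l
  simp only [Finset.mem_filter, Finset.mem_image, Finset.mem_inter, varsClause]
  constructor
  · rintro ⟨hl, hlX⟩
    exact ⟨l.1, ⟨⟨l, hl, rfl⟩, hlX⟩, (hfalse l hl hlX).symm⟩
  · rintro ⟨_, ⟨⟨l', hl', rfl⟩, hlX⟩, rfl⟩
    exact ⟨hfalse l' hl' hlX ▸ hl', hlX⟩

theorem not_satClauseOn_of_filter_subset {t : Clause} (ht : ¬ satClauseOn X f t)
    (hsub : c.filter (fun l => l.1 ∈ X) ⊆ t.filter (fun l => l.1 ∈ X)) :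
    ¬ satClauseOn X f c := by
  rintro ⟨l, hl, hlX, hfl⟩
  exact ht ⟨l, (Finset.mem_filter.1 (hsub (Finset.mem_filter.2 ⟨hl, hlX⟩))).1, hlX, hfl⟩

end Satisfaction

theorem convex_maximal_unsatisfied_clause_general (F : CNF) (σ : List Var)
    (hconv : ConvexWitness F σ)
    (i : ℕ) (f : Var → Bool)
    (A : CNF)
    (hA : A = F.filter (fun c => (varsClause c ∩ (σ.take i).toFinset).Nonempty ∧
            (varsClause c \ (σ.take i).toFinset).Nonempty))
    (hunsat : ∃ c ∈ A, ¬ satClauseOn ((σ.take i).toFinset) f c) :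
    ∃ t ∈ A, ¬ satClauseOn ((σ.take i).toFinset) f t ∧
      (∀ c ∈ A, ¬ satClauseOn ((σ.take i).toFinset) f c →
        c.filter (fun l => l.1 ∈ (σ.take i).toFinset) ⊆
          t.filter (fun l => l.1 ∈ (σ.take i).toFinset)) ∧
      (∀ t' ∈ A, ¬ satClauseOn ((σ.take i).toFinset) f t' →
        (∀ c ∈ A, ¬ satClauseOn ((σ.take i).toFinset) f c →
          c.filter (fun l => l.1 ∈ (σ.take i).toFinset) ⊆
            t'.filter (fun l => l.1 ∈ (σ.take i).toFinset)) →
        t'.filter (fun l => l.1 ∈ (σ.take i).toFinset) =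
          t.filter (fun l => l.1 ∈ (σ.take i).toFinset)) ∧
      (A.filter (fun c => ¬ satClauseOn ((σ.take i).toFinset) f c) =
        A.filter (fun c => c.filter (fun l => l.1 ∈ (σ.take i).toFinset) ⊆
          t.filter (fun l => l.1 ∈ (σ.take i).toFinset))) := by
  set X := (σ.take i).toFinset
  set S := A.filter (fun c => ¬ satClauseOn X f c)
  have hactive : ∀ c ∈ A, c ∈ F ∧ (varsClause c \ X).Nonempty := fun c hc => by
    rw [hA, Finset.mem_filter] at hc
    exact ⟨hc.1, hc.2.2⟩
  have htotal : ∀ c ∈ S, ∀ c' ∈ S, c.filter (fun l => l.1 ∈ X) ⊆ c'.filter (fun l => l.1 ∈ X) ∨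
      c'.filter (fun l => l.1 ∈ X) ⊆ c.filter (fun l => l.1 ∈ X) := by
    intro c hc c' hc'
    rw [Finset.mem_filter] at hc hc'
    rw [filter_mem_eq_image_of_not_satClauseOn hc.2, filter_mem_eq_image_of_not_satClauseOn hc'.2]
    obtain ⟨hcF, hout⟩ := hactive c hc.1
    obtain ⟨hcF', hout'⟩ := hactive c' hc'.1
    exact (hconv.varsClause_inter_take_total hcF hout hcF' hout').imp
      (Finset.image_subset_image ·) (Finset.image_subset_image ·)
  have hS : S.Nonempty := by
    obtain ⟨c, hc, hcu⟩ := hunsat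
    exact ⟨c, Finset.mem_filter.2 ⟨hc, hcu⟩⟩
  obtain ⟨t, htS, hmax⟩ := Finset.exists_forall_subset_of_total _ hS htotal
  rw [Finset.mem_filter] at htS
  have hmax' : ∀ c ∈ A, ¬ satClauseOn X f c →
      c.filter (fun l => l.1 ∈ X) ⊆ t.filter (fun l => l.1 ∈ X) :=
    fun c hc hcu => hmax c (Finset.mem_filter.2 ⟨hc, hcu⟩)
  refine ⟨t, htS.1, htS.2, hmax', fun t' ht' ht'u ht'max =>
    (hmax' t' ht' ht'u).antisymm (ht'max t htS.1 htS.2), ?_⟩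
  exact Finset.filter_congr fun c hc =>
    ⟨hmax' c hc, not_satClauseOn_of_filter_subset htS.2⟩

/-- for a variable convex CNF with prefix variables X = var(π) and an
assignment f not satisfying the set A of var(π)-active clauses, among the clauses of A
not satisfied by f there is one, t, whose restriction to literals on X is
inclusion-maximal, this maximal restriction is unique, and the unsatisfied clauses of A
are exactly those whose X-restriction is contained in that of t. -/
theorem convex_maximal_unsatisfied_clause (F : CNF) (σ : List Var)
    (hnd : σ.Nodup) (hv : σ.toFinset = varsCNF F) (hconv : ConvexWitness F σ)
    (i : ℕ) (hi : i ≤ σ.length) (f : Var → Bool)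
    (A : CNF)
    (hA : A = F.filter (fun c => (varsClause c ∩ (σ.take i).toFinset).Nonempty ∧
            (varsClause c \ (σ.take i).toFinset).Nonempty))
    (hunsat : ∃ c ∈ A, ¬ satClauseOn ((σ.take i).toFinset) f c) :
    ∃ t ∈ A, ¬ satClauseOn ((σ.take i).toFinset) f t ∧
      (∀ c ∈ A, ¬ satClauseOn ((σ.take i).toFinset) f c →
        c.filter (fun l => l.1 ∈ (σ.take i).toFinset) ⊆
          t.filter (fun l => l.1 ∈ (σ.take i).toFinset)) ∧
      (∀ t' ∈ A, ¬ satClauseOn ((σ.take i).toFinset) f t' →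
        (∀ c ∈ A, ¬ satClauseOn ((σ.take i).toFinset) f c →
          c.filter (fun l => l.1 ∈ (σ.take i).toFinset) ⊆
            t'.filter (fun l => l.1 ∈ (σ.take i).toFinset)) →
        t'.filter (fun l => l.1 ∈ (σ.take i).toFinset) =
          t.filter (fun l => l.1 ∈ (σ.take i).toFinset)) ∧
      (A.filter (fun c => ¬ satClauseOn ((σ.take i).toFinset) f c) =
        A.filter (fun c => c.filter (fun l => l.1 ∈ (σ.take i).toFinset) ⊆
          t.filter (fun l => l.1 ∈ (σ.take i).toFinset))) :=
  convex_maximal_unsatisfied_clause_general F σ hconv i f A hA hunsat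
end
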